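/- Let α, c, r > 0, κ ∈ (0,1/2], and let (b_k)_{k≥0} be nonnegative reals with b_0 > 0. Set η_k = (κ/2)^k·r and a_k = η_k^{−α}·b_k, and suppose a_k ≥ c·∑_{l=0}^{k-1} a_l for all k ≥ 1. Define γ := α − ln(1 + c) / ln(2/κ). Then γ < α and for every k ≥ 1, b_k ≥ (c/(1+c))·(η_k/r)^γ · b_0. -/

import Mathlib

/-!
Summing the hypothesis `c * ∑_{l<k} a_l ≤ a_k` gives `∑_{l≤k} a_l ≥ (1 + c) ∑_{l<k} a_l`, so the
partial sums grow at least like `(1 + c)^k a_0`, and hence `a_{k+1} ≥ c (1 + c)^k a_0`. The exponent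
`γ` is chosen so that this geometric growth is exactly a power of the scale:
`(η_k / r)^(γ - α) = ((2/κ)^(-k))^(-log_{2/κ}(1 + c)) = (1 + c)^k`. Undoing the rescaling
`b_k = η_k^α a_k` turns the growth of `a` into the lower bound on `b`.
-/

open Finset

section GeometricGrowth

variable {R : Type*} [Semiring R] [PartialOrder R] [IsOrderedRing R] {a : ℕ → R} {c : R}

theorem pow_mul_le_sum_range_succ_of_mul_sum_le (hc : 0 ≤ 1 + c)
    (h : ∀ k, 1 ≤ k → c * ∑ l ∈ range k, a l ≤ a k) (k : ℕ) :
    (1 + c) ^ k * a 0 ≤ ∑ l ∈ range (k + 1), a l := by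
  induction k with
  | zero => simp
  | succ k ih =>
    calc (1 + c) ^ (k + 1) * a 0 = (1 + c) * ((1 + c) ^ k * a 0) := by rw [pow_succ', mul_assoc]
      _ ≤ (1 + c) * ∑ l ∈ range (k + 1), a l := mul_le_mul_of_nonneg_left ih hc
      _ = ∑ l ∈ range (k + 1), a l + c * ∑ l ∈ range (k + 1), a l := by rw [add_mul, one_mul]
      _ ≤ ∑ l ∈ range (k + 2), a l := by
        rw [sum_range_succ _ (k + 1)]
        exact add_le_add le_rfl (h (k + 1) (Nat.le_add_left 1 k))

theorem mul_pow_mul_le_of_mul_sum_le (hc : 0 ≤ c)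
    (h : ∀ k, 1 ≤ k → c * ∑ l ∈ range k, a l ≤ a k) (k : ℕ) :
    c * (1 + c) ^ k * a 0 ≤ a (k + 1) :=
  calc c * (1 + c) ^ k * a 0 = c * ((1 + c) ^ k * a 0) := mul_assoc _ _ _
    _ ≤ c * ∑ l ∈ range (k + 1), a l :=
      mul_le_mul_of_nonneg_left
        (pow_mul_le_sum_range_succ_of_mul_sum_le (add_nonneg zero_le_one hc) h k) hc
    _ ≤ a (k + 1) := h (k + 1) (Nat.le_add_left 1 k)

end GeometricGrowth

theorem Real.inv_pow_rpow_neg_logb {b p : ℝ} (hb : 0 < b) (hb₁ : b ≠ 1) (hp : 0 < p) (k : ℕ) :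
    (b⁻¹ ^ k) ^ (-Real.logb b p) = p ^ k := by
  rw [inv_pow, Real.inv_rpow (by positivity), ← Real.rpow_neg (by positivity), neg_neg,
    ← Real.rpow_pow_comm hb.le, Real.rpow_logb hb hb₁ hp]

theorem stmt_16_general (α c r κ : ℝ) (hc : 0 < c) (hr : 0 < r)
    (hκ : κ ∈ Set.Ioc (0:ℝ) (1/2))
    (b : ℕ → ℝ)
    (η a : ℕ → ℝ) (hη : ∀ k, η k = (κ / 2) ^ k * r)
    (ha : ∀ k, a k = (η k) ^ (-α) * b k)
    (hrec : ∀ k, 1 ≤ k → c * ∑ l ∈ Finset.range k, a l ≤ a k)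
    (γ : ℝ) (hγ : γ = α - Real.log (1 + c) / Real.log (2 / κ)) :
    γ < α ∧ ∀ k, 1 ≤ k → (c / (1 + c)) * (η k / r) ^ γ * b 0 ≤ b k := by
  obtain ⟨hκ₀, hκ₂⟩ := hκ
  have hscale : 1 < 2 / κ := by rw [one_lt_div hκ₀]; linarith
  change γ = α - Real.logb (2 / κ) (1 + c) at hγ
  refine ⟨hγ ▸ sub_lt_self α (Real.logb_pos hscale (by linarith)), ?_⟩
  rintro (_ | k) hk
  · omega
  have hηpos : 0 < η (k + 1) := by rw [hη]; positivity
  have hratio : (η (k + 1) / r) ^ (γ - α) = (1 + c) ^ (k + 1) := by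
    rw [hη, mul_div_cancel_right₀ _ hr.ne', ← inv_div, hγ, sub_sub_cancel_left]
    exact Real.inv_pow_rpow_neg_logb (by positivity) hscale.ne' (by linarith) _
  have hb₀ : b 0 = r ^ α * a 0 := by
    rw [ha, hη, pow_zero, one_mul, ← mul_assoc, ← Real.rpow_add hr, add_neg_cancel,
      Real.rpow_zero, one_mul]
  have hbk : b (k + 1) = η (k + 1) ^ α * a (k + 1) := by
    rw [ha, ← mul_assoc, ← Real.rpow_add hηpos, add_neg_cancel, Real.rpow_zero, one_mul]
  calc c / (1 + c) * (η (k + 1) / r) ^ γ * b 0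
        = c / (1 + c) * ((η (k + 1) / r) ^ α * (η (k + 1) / r) ^ (γ - α)) * b 0 := by
          rw [← Real.rpow_add (div_pos hηpos hr), add_sub_cancel]
    _ = η (k + 1) ^ α * (c * (1 + c) ^ k * a 0) := by
          rw [hratio, Real.div_rpow hηpos.le hr.le, hb₀]
          field_simp
          ring
    _ ≤ η (k + 1) ^ α * a (k + 1) := by
          gcongr
          exact mul_pow_mul_le_of_mul_sum_le hc.le hrec k
    _ = b (k + 1) := hbk.symm

theorem stmt_16 (α c r κ : ℝ) (hα : 0 < α) (hc : 0 < c) (hr : 0 < r)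
    (hκ : κ ∈ Set.Ioc (0:ℝ) (1/2))
    (b : ℕ → ℝ) (hb : ∀ k, 0 ≤ b k) (hb0 : 0 < b 0)
    (η a : ℕ → ℝ) (hη : ∀ k, η k = (κ / 2) ^ k * r)
    (ha : ∀ k, a k = (η k) ^ (-α) * b k)
    (hrec : ∀ k, 1 ≤ k → c * ∑ l ∈ Finset.range k, a l ≤ a k)
    (γ : ℝ) (hγ : γ = α - Real.log (1 + c) / Real.log (2 / κ)) :
    γ < α ∧ ∀ k, 1 ≤ k → (c / (1 + c)) * (η k / r) ^ γ * b 0 ≤ b k :=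
  stmt_16_general α c r κ hc hr hκ b η a hη ha hrec γ hγ
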